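/- arXiv:2306.03062 — 2 statements merged into one kernel-verified Lean document; each statement's English description precedes it below -/
import Mathlib

section
/- On a normal metric weak para-f-structure, d η^j(ξ_i, ·) = 0 for all i, j; in particular the tensors N^{(4)}_{ij}(X) = 2 d η^j(ξ_i, X) vanish. -/
open scoped BigOperators

noncomputable section

variable (C V : Type*) [CommRing C] [Algebra ℝ C] [AddCommGroup V]
  [Module ℝ V] [Module C V] [IsScalarTower ℝ C V]

/-- A metric weak para-f-structure on a manifold, modelled algebraically:
`C` plays the role of the ring of smooth functions, `V` the `C`-module of vector fields
with Lie bracket `b` and derivation action `act` of vector fields on functions,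
`g` is a compatible pseudo-Riemannian metric (with `f` of rank `2n`, encoded by `hrank`)
and `nabla` its Levi-Civita connection (torsion-free and metric). -/
structure MWPF (p : ℕ) where
  f : V →ₗ[C] V
  Q : V →ₗ[C] V
  ξ : Fin p → V
  η : Fin p → V →ₗ[C] C
  g : V →ₗ[C] V →ₗ[C] C
  b : V → V → V
  act : V → C → C
  nabla : V → V → V
  hQbij : Function.Bijective Q
  hf2 : ∀ X, f (f X) = Q X - ∑ i, η i X • ξ i
  hf3 : ∀ X, f (f (f X)) = f (Q X)
  hetaxi : ∀ i j, η i (ξ j) = if i = j then (1 : C) else 0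
  hQxi : ∀ i, Q (ξ i) = ξ i
  hrange : ∀ X : V, X ∈ LinearMap.range f ↔ ∀ i, η i X = 0
  hgsymm : ∀ X Y, g X Y = g Y X
  hgnondeg : ∀ X, (∀ Y, g X Y = 0) → X = 0
  hrank : ∀ Z, (∀ i, η i Z = 0) → (∀ Y, g Z (f Y) = 0) → Z = 0
  hgcompat : ∀ X Y, g (f X) (f Y) = -(g X (Q Y)) + ∑ i, η i X * η i Y
  hbskew : ∀ X Y, b X Y = - b Y X
  hbaddl : ∀ X Y Z, b (X + Y) Z = b X Z + b Y Z
  hjacobi : ∀ X Y Z, b X (b Y Z) + b Y (b Z X) + b Z (b X Y) = 0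
  hactadd : ∀ X a c, act X (a + c) = act X a + act X c
  hactmul : ∀ X a c, act X (a * c) = act X a * c + a * act X c
  hactX : ∀ (a : C) X Y c, act (a • X + Y) c = a * act X c + act Y c
  hbleib : ∀ X (a : C) Y, b X (a • Y) = act X a • Y + a • b X Y
  hnab1 : ∀ (a : C) X X' Y, nabla (a • X + X') Y = a • nabla X Y + nabla X' Y
  hnabadd : ∀ X Y Z, nabla X (Y + Z) = nabla X Y + nabla X Z
  hnableib : ∀ X (a : C) Y, nabla X (a • Y) = act X a • Y + a • nabla X Y
  htors : ∀ X Y, nabla X Y - nabla Y X = b X Y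
  hmetric : ∀ X Y Z, act X (g Y Z) = g (nabla X Y) Z + g Y (nabla X Z)

namespace MWPF

variable {C V} {p : ℕ} (s : MWPF C V p)

/-- The fundamental 2-form `Φ(X,Y) = g(X, fY)`. -/
def Phi (X Y : V) : C := s.g X (s.f Y)

/-- `dη^i(X,Y) = (1/2)(X(η^i Y) - Y(η^i X) - η^i [X,Y])`. -/
def dEta (i : Fin p) (X Y : V) : C :=
  (2⁻¹ : ℝ) • (s.act X (s.η i Y) - s.act Y (s.η i X) - s.η i (s.b X Y))

/-- The Nijenhuis torsion `[f,f]`. -/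
def Nij (X Y : V) : V :=
  s.f (s.f (s.b X Y)) + s.b (s.f X) (s.f Y) - s.f (s.b (s.f X) Y) - s.f (s.b X (s.f Y))

/-- `N^(1)(X,Y) = [f,f](X,Y) - 2 Σ_i dη^i(X,Y) ξ_i`. -/
def N1 (X Y : V) : V := s.Nij X Y - (2 : ℝ) • ∑ i, s.dEta i X Y • s.ξ i

/-- The difference tensor `Q̃ = Q - id`. -/
def Qt (X : V) : V := s.Q X - X

/-- The Lie derivative of `f`: `(£_Z f)X = [Z, fX] - f[Z,X]`. -/
def Lief (Z X : V) : V := s.b Z (s.f X) - s.f (s.b Z X)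

/-- The Lie derivative of `g`: `(£_Z g)(X,Y) = Z(g(X,Y)) - g([Z,X],Y) - g(X,[Z,Y])`. -/
def Lieg (Z X Y : V) : C := s.act Z (s.g X Y) - s.g (s.b Z X) Y - s.g X (s.b Z Y)

/-- `N^(2)_i(X,Y) = (£_{fX} η^i)Y - (£_{fY} η^i)X`. -/
def N2 (i : Fin p) (X Y : V) : C :=
  (s.act (s.f X) (s.η i Y) - s.η i (s.b (s.f X) Y))
    - (s.act (s.f Y) (s.η i X) - s.η i (s.b (s.f Y) X))

/-- The exterior differential of the fundamental 2-form. -/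
def dPhi (X Y Z : V) : C := (3⁻¹ : ℝ) •
  (s.act X (s.Phi Y Z) + s.act Y (s.Phi Z X) + s.act Z (s.Phi X Y)
    - s.Phi (s.b X Y) Z - s.Phi (s.b Z X) Y - s.Phi (s.b Y Z) X)

/-- The tensor `h_i = (1/2) £_{ξ_i} f`. -/
def hmap (i : Fin p) (X : V) : V := (2⁻¹ : ℝ) • s.Lief (s.ξ i) X

/-- The tensor `N^(5)`. -/
def N5 (X Y Z : V) : C :=
  s.act (s.f Z) (s.g X (s.Qt Y)) - s.act (s.f Y) (s.g X (s.Qt Z))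
    + s.g (s.b X (s.f Z)) (s.Qt Y) - s.g (s.b X (s.f Y)) (s.Qt Z)
    + s.g (s.b Y (s.f Z) - s.b Z (s.f Y) - s.f (s.b Y Z)) (s.Qt X)

/-- The curvature tensor of `nabla`. -/
def Rm (X Y Z : V) : V :=
  s.nabla X (s.nabla Y Z) - s.nabla Y (s.nabla X Z) - s.nabla (s.b X Y) Z

end MWPF

/-!
Applying `η^j` to `N^(1)(X, Y) = 0` kills every term of `[f,f](X, Y)` lying in the image of `f`
and leaves `2 dη^j(X, Y) = η^j [fX, fY]`. Since `f ξ_i = 0`, taking `X = ξ_i` makes the right-hand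
side vanish.
-/

namespace MWPF

variable {C V} {p : ℕ} (s : MWPF C V p)

section

omit [Algebra ℝ C] [Module ℝ V] [IsScalarTower ℝ C V]

theorem eta_sum_smul_xi (j : Fin p) (c : Fin p → C) : s.η j (∑ k, c k • s.ξ k) = c j := by
  simp [s.hetaxi]

theorem f_f_xi_eq_zero (i : Fin p) : s.f (s.f (s.ξ i)) = 0 := by
  have hsum : ∑ k, s.η k (s.ξ i) • s.ξ k = s.ξ i := by simp [s.hetaxi]
  rw [s.hf2, s.hQxi, hsum, sub_self]

theorem f_xi_eq_zero (i : Fin p) : s.f (s.ξ i) = 0 := by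
  have h := s.hf3 (s.ξ i)
  rwa [s.hQxi, f_f_xi_eq_zero, map_zero, eq_comm] at h

theorem eta_f_eq_zero (j : Fin p) (X : V) : s.η j (s.f X) = 0 :=
  (s.hrange (s.f X)).mp ⟨X, rfl⟩ j

theorem b_zero_left (Y : V) : s.b 0 Y = 0 := by
  simpa using s.hbaddl 0 0 Y

theorem eta_Nij (j : Fin p) (X Y : V) : s.η j (s.Nij X Y) = s.η j (s.b (s.f X) (s.f Y)) := by
  simp only [Nij, map_sub, map_add, eta_f_eq_zero, zero_add, sub_zero]

end

theorem eta_N1 (j : Fin p) (X Y : V) :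
    s.η j (s.N1 X Y) = s.η j (s.b (s.f X) (s.f Y)) - (2 : ℝ) • s.dEta j X Y := by
  rw [N1, map_sub, eta_Nij, LinearMap.map_smul_of_tower, eta_sum_smul_xi]

theorem two_smul_dEta_of_normal (hN : ∀ X Y, s.N1 X Y = 0) (j : Fin p) (X Y : V) :
    (2 : ℝ) • s.dEta j X Y = s.η j (s.b (s.f X) (s.f Y)) := by
  rw [eq_comm, ← sub_eq_zero, ← eta_N1, hN, map_zero]

end MWPF

/-- on a normal metric weak para-f-structure, `dη^j(ξ_i, ·) = 0`;
in particular the tensors `N^(4)_{ij}(X) = 2 dη^j(ξ_i, X)` vanish. -/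
theorem normal_dEta_xi_eq_zero {C V : Type*} [CommRing C] [Algebra ℝ C] [AddCommGroup V]
    [Module ℝ V] [Module C V] [IsScalarTower ℝ C V] {p : ℕ} (s : MWPF C V p)
    (hN : ∀ X Y, s.N1 X Y = 0) :
    ∀ (i j : Fin p) (X : V), s.dEta j (s.ξ i) X = 0 := by
  intro i j X
  have h := s.two_smul_dEta_of_normal hN j (s.ξ i) X
  rw [s.f_xi_eq_zero, s.b_zero_left, map_zero, smul_eq_zero] at h
  exact h.resolve_left two_ne_zero
end
end

section
/- On a weak almost para-C-manifold, [ξ_i, ξ_j] = 0 and ∇_{ξ_i} ξ_j = 0 for all i, j; hence ker f defines a totally geodesic foliation with sectional curvature K(ξ_i, ξ_j) = 0. -/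
open scoped BigOperators

noncomputable section

variable (C V : Type*) [CommRing C] [Algebra ℝ C] [AddCommGroup V]
  [Module ℝ V] [Module C V] [IsScalarTower ℝ C V]

/-! Closedness of `η^k` and the constancy of `η^k(ξ_j)` give `η^k([ξ_i, X]) = ξ_i(η^k X)`, so
`[ξ_i, ξ_j]` has no `ξ`-components; since `fξ_i = 0`, `dΦ(ξ_i, ξ_j, Y) = 0` reduces to
`g([ξ_i, ξ_j], fY) = 0`, and the two together force `[ξ_i, ξ_j] = 0`. For the connection,
metric compatibility and torsion-freeness give `g(∇_{ξ_i} ξ_j, Z) = -η^j(∇_Z ξ_i)`. This is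
symmetric in `i, j` because `∇_{ξ_i} ξ_j - ∇_{ξ_j} ξ_i = [ξ_i, ξ_j] = 0`, and antisymmetric
because differentiating the constant `g(ξ_i, ξ_j)` along `Z` gives
`η^j(∇_Z ξ_i) + η^i(∇_Z ξ_j) = 0`; hence it vanishes. -/

namespace MWPF

variable {C V : Type*} [CommRing C] [AddCommGroup V] [Module C V] {p : ℕ} (s : MWPF C V p)

lemma act_zero (X : V) : s.act X 0 = 0 := by
  simpa using s.hactadd X 0 0

lemma act_one (X : V) : s.act X 1 = 0 := by
  simpa using s.hactmul X 1 1

lemma act_eta_xi (X : V) (i j : Fin p) : s.act X (s.η i (s.ξ j)) = 0 := by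
  rw [s.hetaxi]
  split_ifs
  · exact s.act_one X
  · exact s.act_zero X

lemma nabla_zero_right (X : V) : s.nabla X 0 = 0 := by
  simpa using s.hnabadd X 0 0

lemma nabla_zero_left (Y : V) : s.nabla 0 Y = 0 := by
  simpa using s.hnab1 1 0 0 Y

lemma f_xi (j : Fin p) : s.f (s.ξ j) = 0 := by
  have hff : s.f (s.f (s.ξ j)) = 0 := by
    simp [s.hf2, s.hQxi, s.hetaxi, ite_smul]
  simpa [s.hQxi, hff] using (s.hf3 (s.ξ j)).symm

lemma g_xi_right (j : Fin p) (X : V) : s.g X (s.ξ j) = s.η j X := by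
  have h := s.hgcompat X (s.ξ j)
  simp only [s.f_xi, map_zero, s.hQxi, s.hetaxi, mul_ite, mul_one, mul_zero,
    Finset.sum_ite_eq', Finset.mem_univ, if_true] at h
  linear_combination h

lemma g_xi_left (j : Fin p) (X : V) : s.g (s.ξ j) X = s.η j X := by
  rw [s.hgsymm, g_xi_right]

lemma eta_f (k : Fin p) (X : V) : s.η k (s.f X) = 0 :=
  (s.hrange (s.f X)).mp ⟨X, rfl⟩ k

lemma eta_nabla_xi_add_eta_nabla_xi (Z : V) (i j : Fin p) :
    s.η j (s.nabla Z (s.ξ i)) + s.η i (s.nabla Z (s.ξ j)) = 0 := by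
  have hmet := s.hmetric Z (s.ξ i) (s.ξ j)
  rw [s.g_xi_left, s.act_eta_xi, s.g_xi_right, s.g_xi_left] at hmet
  exact hmet.symm

variable [Algebra ℝ C]

lemma dEta_eq_zero_iff (i : Fin p) (X Y : V) :
    s.dEta i X Y = 0 ↔ s.act X (s.η i Y) - s.act Y (s.η i X) - s.η i (s.b X Y) = 0 :=
  smul_eq_zero_iff_right (by norm_num)

lemma dPhi_eq_zero_iff (X Y Z : V) :
    s.dPhi X Y Z = 0 ↔ s.act X (s.Phi Y Z) + s.act Y (s.Phi Z X) + s.act Z (s.Phi X Y)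
      - s.Phi (s.b X Y) Z - s.Phi (s.b Z X) Y - s.Phi (s.b Y Z) X = 0 :=
  smul_eq_zero_iff_right (by norm_num)

lemma eta_bracket_xi (hEta : ∀ (i : Fin p) (X Y : V), s.dEta i X Y = 0)
    (k i : Fin p) (X : V) : s.η k (s.b (s.ξ i) X) = s.act (s.ξ i) (s.η k X) := by
  have h := (s.dEta_eq_zero_iff k (s.ξ i) X).mp (hEta k (s.ξ i) X)
  linear_combination -h - s.act_eta_xi X k i

lemma eta_bracket_xi_xi (hEta : ∀ (i : Fin p) (X Y : V), s.dEta i X Y = 0)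
    (k i j : Fin p) : s.η k (s.b (s.ξ i) (s.ξ j)) = 0 := by
  rw [s.eta_bracket_xi hEta, s.act_eta_xi]

lemma Phi_bracket_xi_xi (hPhi : ∀ X Y Z, s.dPhi X Y Z = 0) (i j : Fin p) (Y : V) :
    s.Phi (s.b (s.ξ i) (s.ξ j)) Y = 0 := by
  have h := (s.dPhi_eq_zero_iff (s.ξ i) (s.ξ j) Y).mp (hPhi (s.ξ i) (s.ξ j) Y)
  simp only [Phi, s.f_xi, map_zero, s.g_xi_left, s.eta_f, s.act_zero] at h ⊢
  linear_combination -h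

lemma bracket_xi_xi (hPhi : ∀ X Y Z, s.dPhi X Y Z = 0)
    (hEta : ∀ (i : Fin p) (X Y : V), s.dEta i X Y = 0) (i j : Fin p) :
    s.b (s.ξ i) (s.ξ j) = 0 :=
  s.hrank _ (fun k => s.eta_bracket_xi_xi hEta k i j) (s.Phi_bracket_xi_xi hPhi i j)

lemma g_nabla_xi_xi (hEta : ∀ (i : Fin p) (X Y : V), s.dEta i X Y = 0)
    (i j : Fin p) (Z : V) : s.g (s.nabla (s.ξ i) (s.ξ j)) Z = -s.η j (s.nabla Z (s.ξ i)) := by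
  have hmet := s.hmetric (s.ξ i) (s.ξ j) Z
  rw [← sub_add_cancel (s.nabla (s.ξ i) Z) (s.nabla Z (s.ξ i)), s.htors, map_add,
    s.g_xi_left, s.g_xi_left, s.g_xi_left, s.eta_bracket_xi hEta] at hmet
  linear_combination -hmet

lemma nabla_xi_xi (hPhi : ∀ X Y Z, s.dPhi X Y Z = 0)
    (hEta : ∀ (i : Fin p) (X Y : V), s.dEta i X Y = 0) (i j : Fin p) :
    s.nabla (s.ξ i) (s.ξ j) = 0 := by
  have hsymm : s.nabla (s.ξ i) (s.ξ j) = s.nabla (s.ξ j) (s.ξ i) := by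
    rw [← sub_eq_zero, s.htors, s.bracket_xi_xi hPhi hEta]
  refine s.hgnondeg _ fun Z => (smul_eq_zero_iff_right (two_ne_zero (α := ℝ))).mp ?_
  calc (2 : ℝ) • s.g (s.nabla (s.ξ i) (s.ξ j)) Z
      = s.g (s.nabla (s.ξ i) (s.ξ j)) Z + s.g (s.nabla (s.ξ j) (s.ξ i)) Z := by
        rw [two_smul, ← hsymm]
    _ = -(s.η j (s.nabla Z (s.ξ i)) + s.η i (s.nabla Z (s.ξ j))) := by
        rw [s.g_nabla_xi_xi hEta, s.g_nabla_xi_xi hEta]; ring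
    _ = 0 := by rw [s.eta_nabla_xi_add_eta_nabla_xi, neg_zero]

lemma Rm_xi_xi_xi (hPhi : ∀ X Y Z, s.dPhi X Y Z = 0)
    (hEta : ∀ (i : Fin p) (X Y : V), s.dEta i X Y = 0) (i j k : Fin p) :
    s.Rm (s.ξ i) (s.ξ j) (s.ξ k) = 0 := by
  simp only [Rm, s.nabla_xi_xi hPhi hEta, s.bracket_xi_xi hPhi hEta, s.nabla_zero_right,
    s.nabla_zero_left, sub_zero]

end MWPF

theorem paraC_xi_flat_general {C V : Type*} [CommRing C] [Algebra ℝ C] [AddCommGroup V]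
    [Module C V] {p : ℕ} (s : MWPF C V p)
    (hPhi : ∀ X Y Z, s.dPhi X Y Z = 0)
    (hEta : ∀ (i : Fin p) (X Y : V), s.dEta i X Y = 0) :
    (∀ i j : Fin p, s.b (s.ξ i) (s.ξ j) = 0) ∧
    (∀ i j : Fin p, s.nabla (s.ξ i) (s.ξ j) = 0) ∧
    (∀ i j : Fin p, s.g (s.Rm (s.ξ i) (s.ξ j) (s.ξ j)) (s.ξ i) = 0) :=
  ⟨s.bracket_xi_xi hPhi hEta, s.nabla_xi_xi hPhi hEta,
    fun i j => by rw [s.Rm_xi_xi_xi hPhi hEta, map_zero, LinearMap.zero_apply]⟩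

/-- on a weak almost para-C-manifold (`dΦ = 0`, `dη^i = 0`),
`[ξ_i, ξ_j] = 0` and `∇_{ξ_i} ξ_j = 0`; hence `ker f` defines a totally geodesic
foliation with sectional curvature `K(ξ_i, ξ_j) = 0`. -/
theorem paraC_xi_flat {C V : Type*} [CommRing C] [Algebra ℝ C] [AddCommGroup V]
    [Module ℝ V] [Module C V] [IsScalarTower ℝ C V] {p : ℕ} (s : MWPF C V p)
    (hPhi : ∀ X Y Z, s.dPhi X Y Z = 0)
    (hEta : ∀ (i : Fin p) (X Y : V), s.dEta i X Y = 0) :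
    (∀ i j : Fin p, s.b (s.ξ i) (s.ξ j) = 0) ∧
    (∀ i j : Fin p, s.nabla (s.ξ i) (s.ξ j) = 0) ∧
    (∀ i j : Fin p, s.g (s.Rm (s.ξ i) (s.ξ j) (s.ξ j)) (s.ξ i) = 0) :=
  paraC_xi_flat_general s hPhi hEta
end
end
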